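/- For any signed permutation π all of whose elements are positive and any signed prefix or suffix reversal ρ̄ (i.e., ρ̄(1,j) with j < n, or ρ̄(i,n) with i > 1), the number of signed reversal fragmentation breakpoints removed by ρ̄ is strictly less than 1, i.e., ρ̄ removes no fragmentation breakpoints: b^f(π·ρ̄) ≥ b^f(π). -/

import Mathlib

/-!
Inside the reversed block the adjacency `(π_l, π_{l+1})` becomes `(-π_{l+1}, -π_l)` at the
mirrored position, with the same difference, and adjacencies away from the block are untouched.
The two adjacencies straddling the ends of the block become pairs of opposite signs, whose
difference is never `1` when `π` is positive. Hence mirroring the positions inside the block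
injects the breakpoints of `π` into those of `π ρ̄`.
-/

/-- Signed permutation of `{1,…,n}` (no extension): the absolute values of
`p 1, …, p n` are a bijection onto `{1,…,n}`. -/
def IsSignedPerm (n : ℕ) (p : ℕ → ℤ) : Prop :=
  (∀ i, 1 ≤ i → i ≤ n → 1 ≤ |p i| ∧ |p i| ≤ (n : ℤ)) ∧
  (∀ i j, 1 ≤ i → i ≤ n → 1 ≤ j → j ≤ n → |p i| = |p j| → i = j)

/-- Number of transposition (= signed reversal) fragmentation breakpoints:
pairs `(p i, p (i+1))`, `1 ≤ i < n`, with `p (i+1) - p i ≠ 1` (no extension). -/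
def fbT (n : ℕ) (p : ℕ → ℤ) : ℕ :=
  ((Finset.Ico 1 n).filter (fun i => p (i+1) - p i ≠ 1)).card

/-- The signed reversal ρ̄(i,j): replaces `p_i … p_j` by `-p_j … -p_i`. -/
def applySR (p : ℕ → ℤ) (i j : ℕ) : ℕ → ℤ := fun l =>
  if i ≤ l ∧ l ≤ j then -p (i + j - l) else p l

def reflectAdj (i j l : ℕ) : ℕ := if i ≤ l ∧ l < j then i + j - 1 - l else l

theorem reflectAdj_involutive (i j : ℕ) : Function.Involutive (reflectAdj i j) := by
  intro l
  unfold reflectAdj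
  split_ifs <;> omega

section applySR

variable {p : ℕ → ℤ} {i j l : ℕ}

theorem applySR_of_mem (h : i ≤ l ∧ l ≤ j) : applySR p i j l = -p (i + j - l) :=
  if_pos h

theorem applySR_of_not_mem (h : ¬(i ≤ l ∧ l ≤ j)) : applySR p i j l = p l :=
  if_neg h

theorem applySR_succ_sub_reflectAdj_of_lt (hil : i ≤ l) (hlj : l < j) :
    applySR p i j (reflectAdj i j l + 1) - applySR p i j (reflectAdj i j l) =
      p (l + 1) - p l := by
  have hr : reflectAdj i j l = i + j - 1 - l := if_pos ⟨hil, hlj⟩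
  rw [hr, applySR_of_mem (by omega), applySR_of_mem (by omega),
    show i + j - (i + j - 1 - l + 1) = l by omega, show i + j - (i + j - 1 - l) = l + 1 by omega]
  ring

theorem applySR_succ_sub_of_disjoint (h : l + 1 < i ∨ j < l) :
    applySR p i j (l + 1) - applySR p i j l = p (l + 1) - p l := by
  rw [applySR_of_not_mem (by omega), applySR_of_not_mem (by omega)]

theorem applySR_succ_sub_left_end (hl : l + 1 = i) (hij : i ≤ j) :
    applySR p i j (l + 1) - applySR p i j l = -(p j + p l) := by
  rw [applySR_of_mem (by omega), applySR_of_not_mem (by omega),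
    show i + j - (l + 1) = j by omega]
  ring

theorem applySR_succ_sub_right_end (hij : i ≤ j) :
    applySR p i j (j + 1) - applySR p i j j = p (j + 1) + p i := by
  rw [applySR_of_not_mem (by omega), applySR_of_mem (by omega), show i + j - j = i by omega]
  ring

end applySR

theorem reflectAdj_mapsTo_breakpoints {n : ℕ} {p : ℕ → ℤ}
    (hpos : ∀ i, 1 ≤ i → i ≤ n → 0 < p i) {i j : ℕ} (hi : 1 ≤ i) (hij : i ≤ j) (hj : j ≤ n) :
    Set.MapsTo (reflectAdj i j)
      ((Finset.Ico 1 n).filter (fun l => p (l + 1) - p l ≠ 1))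
      ((Finset.Ico 1 n).filter (fun l => applySR p i j (l + 1) - applySR p i j l ≠ 1)) := by
  intro l hl
  simp only [Finset.coe_filter, Finset.mem_Ico, Set.mem_ofPred_eq] at hl ⊢
  obtain ⟨⟨hl1, hln⟩, hbreak⟩ := hl
  by_cases hinside : i ≤ l ∧ l < j
  · have hr : reflectAdj i j l = i + j - 1 - l := if_pos hinside
    refine ⟨by omega, ?_⟩
    rwa [applySR_succ_sub_reflectAdj_of_lt hinside.1 hinside.2]
  · have hr : reflectAdj i j l = l := if_neg hinside
    refine ⟨by omega, ?_⟩
    rw [hr]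
    rcases (show l + 1 < i ∨ j < l ∨ l + 1 = i ∨ l = j by omega) with h | h | h | rfl
    · rwa [applySR_succ_sub_of_disjoint (Or.inl h)]
    · rwa [applySR_succ_sub_of_disjoint (Or.inr h)]
    · rw [applySR_succ_sub_left_end h hij]
      have := hpos j (by omega) hj
      have := hpos l hl1 (by omega)
      omega
    · rw [applySR_succ_sub_right_end hij]
      have := hpos i hi (by omega)
      have := hpos (l + 1) (by omega) (by omega)
      omega

theorem stmt13_general (n : ℕ) (p : ℕ → ℤ)
    (hpos : ∀ i, 1 ≤ i → i ≤ n → 0 < p i)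
    (i j : ℕ) (hi : 1 ≤ i) (hij : i ≤ j) (hj : j ≤ n) :
    fbT n (applySR p i j) ≥ fbT n p :=
  Finset.card_le_card_of_injOn (reflectAdj i j) (reflectAdj_mapsTo_breakpoints hpos hi hij hj)
    (reflectAdj_involutive i j).injective.injOn

theorem stmt13 (n : ℕ) (p : ℕ → ℤ) (hp : IsSignedPerm n p)
    (hpos : ∀ i, 1 ≤ i → i ≤ n → 0 < p i)
    (i j : ℕ) (hi : 1 ≤ i) (hij : i ≤ j) (hj : j ≤ n)
    (hps : (i = 1 ∧ j < n) ∨ (1 < i ∧ j = n)) :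
    fbT n (applySR p i j) ≥ fbT n p :=
  stmt13_general n p hpos i j hi hij hj
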